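/- (Ancona's lemma for trees.) Under hypothesis (H), for every c ∈ ℕ there exists α > 0, depending only on ε and c (one may take α = 3 ε^{2c+2}), such that for every geodesic ray γ from o and every y ∈ S with d(y, π(y)) ≤ c one has G(o,y) · K(y) ≥ α, where K(y) = G(y,π(y))/G(o,π(y)) is the Martin kernel along γ. -/

import Mathlib

/-!
For any vertices `o, y, z` with `d = d(y, z)`, a walk to `z` followed by a geodesic from `z` to `y`
gives `G(o,y) ≥ G(o,z) p_d(z,y) ≥ ε^d G(o,z)`, and likewise `G(y,z) ≥ ε^d`; hence
`G(o,y) G(y,z) / G(o,z) ≥ ε^(2d) ≥ ε^(2c) ≥ 3 ε^(2c+2)`, the last step because `ε ≤ 1/2 - η < 1/2`.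

The real work is to show that the Green function is finite. On a tree all neighbours of `x` but
one are farther from `y` than `x`, and the exceptional one is reached with probability at most
`1/2 - η`; so the transition operator contracts `x ↦ (1 - 2η)^d(x,y)` by the factor `1 - 2η²`,
which gives `p_n(x,y) ≤ (1 - 2η²)^n`.
-/

open scoped Classical

noncomputable section

/-- The `n`-step transition probabilities of the nearest-neighbour walk with
one-step transition probabilities `p`. -/
def pn {S : Type*} (p : S → S → ℝ) : ℕ → S → S → ℝ
  | 0, x, y => if x = y then 1 else 0
  | n + 1, x, y => ∑' z, p x z * pn p n z y

/-- The Green function `G(x,y) = ∑_n p_n(x,y)`. -/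
def green {S : Type*} (p : S → S → ℝ) (x y : S) : ℝ := ∑' n, pn p n x y

namespace SimpleGraph

variable {V : Type*} {G : SimpleGraph V}

lemma IsAcyclic.eq_penultimate_of_adj_of_dist_lt (hG : G.IsAcyclic) (hconn : G.Connected)
    {x y w : V} {p : G.Walk y x} (hp : p.IsPath) (hadj : G.Adj x w)
    (hw : G.dist y w < G.dist y x) : w = p.penultimate := by
  classical
  obtain ⟨q, hq, hql⟩ := hconn.exists_path_of_dist y w
  have hx : x ∉ q.support := fun hx =>
    (dist_le (q.takeUntil x hx)).trans (q.length_takeUntil_le_length hx) |>.not_gt (hql ▸ hw)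
  exact hG.eq_penultimate_of_adj_end hp hadj
    (hG.mem_support_of_ne_mem_support_of_adj_of_isPath hp hq hadj hx)

lemma IsAcyclic.exists_forall_adj_ne_dist_eq (hG : G.IsAcyclic) (hconn : G.Connected) (x y : V) :
    ∃ w₀, ∀ w, G.Adj x w → w ≠ w₀ → G.dist w y = G.dist x y + 1 := by
  obtain ⟨p, hp, -⟩ := hconn.exists_path_of_dist y x
  refine ⟨p.penultimate, fun w hadj hne => ?_⟩
  rw [dist_comm, dist_comm (u := x)]
  refine (hG.dist_eq_dist_add_one_of_adj_of_reachable y hadj (hconn y x)).resolve_left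
    fun h => hne (hG.eq_penultimate_of_adj_of_dist_lt hconn hp hadj (by omega))

end SimpleGraph

open SimpleGraph

section

variable {S : Type*} {p : S → S → ℝ}

lemma pn_nonneg (hp : ∀ x y, 0 ≤ p x y) : ∀ n x y, 0 ≤ pn p n x y
  | 0, x, y => by unfold pn; positivity
  | n + 1, x, y => tsum_nonneg fun z => mul_nonneg (hp x z) (pn_nonneg hp n z y)

lemma green_nonneg (hp : ∀ x y, 0 ≤ p x y) (x y : S) : 0 ≤ green p x y :=
  tsum_nonneg fun n => pn_nonneg hp n x y

lemma pn_le_green (hp : ∀ x y, 0 ≤ p x y) {x y : S} (hsum : Summable fun n => pn p n x y) (n : ℕ) :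
    pn p n x y ≤ green p x y :=
  hsum.le_tsum n fun m _ => pn_nonneg hp m x y

lemma pn_one (x y : S) : pn p 1 x y = p x y := by
  simp [pn]

variable {G : SimpleGraph S} [∀ x, Fintype (G.neighborSet x)]

lemma pn_succ_eq_sum_neighborFinset (hp_zero : ∀ x y, ¬ G.Adj x y → p x y = 0)
    (n : ℕ) (x y : S) : pn p (n + 1) x y = ∑ z ∈ G.neighborFinset x, p x z * pn p n z y :=
  tsum_eq_sum fun z hz => by
    rw [hp_zero x z (by simpa using hz), zero_mul]

lemma pn_mul_pn_le (hp : ∀ x y, 0 ≤ p x y) (hp_zero : ∀ x y, ¬ G.Adj x y → p x y = 0) :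
    ∀ m n (x z y : S), pn p m x z * pn p n z y ≤ pn p (m + n) x y
  | 0, n, x, z, y => by
    rcases eq_or_ne x z with rfl | hxz
    · simp [pn]
    · simpa [pn, hxz] using pn_nonneg hp n x y
  | m + 1, n, x, z, y => by
    rw [Nat.add_right_comm, pn_succ_eq_sum_neighborFinset hp_zero,
      pn_succ_eq_sum_neighborFinset hp_zero, Finset.sum_mul]
    refine Finset.sum_le_sum fun w _ => ?_
    rw [mul_assoc]
    exact mul_le_mul_of_nonneg_left (pn_mul_pn_le hp hp_zero m n w z y) (hp x w)

lemma pow_length_le_pn (hp : ∀ x y, 0 ≤ p x y) (hp_zero : ∀ x y, ¬ G.Adj x y → p x y = 0)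
    {ε : ℝ} (hε : 0 ≤ ε) (hε_le : ∀ x y, G.Adj x y → ε ≤ p x y) :
    ∀ {x y : S} (q : G.Walk x y), ε ^ q.length ≤ pn p q.length x y
  | _, _, .nil => by simp [pn]
  | x, y, .cons (v := w) h q => by
    rw [Walk.length_cons, add_comm]
    calc ε ^ (1 + q.length) = ε * ε ^ q.length := by ring
      _ ≤ pn p 1 x w * pn p q.length w y := by
        rw [pn_one x w]
        exact mul_le_mul (hε_le x w h) (pow_length_le_pn hp hp_zero hε hε_le q)
          (pow_nonneg hε _) (hp x w)
      _ ≤ pn p (1 + q.length) x y := pn_mul_pn_le hp hp_zero 1 q.length x w y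

lemma pn_le_pow_mul_of_sum_le (hp : ∀ x y, 0 ≤ p x y) (hp_zero : ∀ x y, ¬ G.Adj x y → p x y = 0)
    {θ : ℝ} (hθ : 0 ≤ θ) {f : S → ℝ} {y : S} (hf : ∀ x, 0 ≤ f x) (hfy : 1 ≤ f y)
    (hf_sum : ∀ x, ∑ w ∈ G.neighborFinset x, p x w * f w ≤ θ * f x) :
    ∀ n x, pn p n x y ≤ θ ^ n * f x
  | 0, x => by
    rcases eq_or_ne x y with rfl | hxy
    · simpa [pn] using hfy
    · simpa [pn, hxy] using hf x
  | n + 1, x => by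
    rw [pn_succ_eq_sum_neighborFinset hp_zero]
    calc ∑ w ∈ G.neighborFinset x, p x w * pn p n w y
        ≤ ∑ w ∈ G.neighborFinset x, p x w * (θ ^ n * f w) := by
          gcongr with w
          · exact hp x w
          · exact pn_le_pow_mul_of_sum_le hp hp_zero hθ hf hfy hf_sum n w
      _ = θ ^ n * ∑ w ∈ G.neighborFinset x, p x w * f w := by
          rw [Finset.mul_sum]; exact Finset.sum_congr rfl fun w _ => by ring
      _ ≤ θ ^ (n + 1) * f x := by
          rw [pow_succ, mul_assoc]; gcongr; exact hf_sum x

lemma sum_mul_pow_dist_le (hG : G.IsAcyclic) (hconn : G.Connected) (hp : ∀ x y, 0 ≤ p x y)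
    (hp_sum : ∀ x, ∑ y ∈ G.neighborFinset x, p x y = 1) {η : ℝ} (hη : 0 < η) (hη' : η < 1 / 2)
    (hp_le : ∀ x y, G.Adj x y → p x y ≤ 1 / 2 - η) (x y : S) :
    ∑ w ∈ G.neighborFinset x, p x w * (1 - 2 * η) ^ G.dist w y
      ≤ (1 - 2 * η ^ 2) * (1 - 2 * η) ^ G.dist x y := by
  set β := 1 - 2 * η
  set D := G.dist x y
  have hβ : 0 < β := by linarith
  have hβ1 : β ≤ 1 := by linarith
  obtain ⟨w₀, hfar⟩ := hG.exists_forall_adj_ne_dist_eq hconn x y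
  have hsum_far : ∀ s ⊆ G.neighborFinset x, w₀ ∉ s →
      ∑ w ∈ s, p x w * β ^ G.dist w y = (∑ w ∈ s, p x w) * β ^ (D + 1) := fun s hs hw₀ => by
    rw [Finset.sum_mul]
    refine Finset.sum_congr rfl fun w hw => ?_
    rw [hfar w (by simpa using hs hw) (ne_of_mem_of_not_mem hw hw₀)]
  by_cases h₀ : G.Adj x w₀
  · have hw₀ : w₀ ∈ G.neighborFinset x := by simpa using h₀
    have hrest : ∑ w ∈ (G.neighborFinset x).erase w₀, p x w = 1 - p x w₀ := by
      rw [← hp_sum x, ← Finset.add_sum_erase _ _ hw₀, add_sub_cancel_left]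
    have hclose : β * β ^ G.dist w₀ y ≤ β ^ D := by
      rw [← pow_succ']
      refine pow_le_pow_of_le_one hβ.le hβ1 ?_
      have := hconn.dist_triangle (u := x) (v := w₀) (w := y)
      rw [dist_eq_one_iff_adj.2 h₀] at this
      omega
    rw [← Finset.add_sum_erase _ _ hw₀, hsum_far _ (Finset.erase_subset _ _)
      (Finset.notMem_erase _ _), hrest]
    refine le_of_mul_le_mul_left ?_ hβ
    have hq := hp x w₀
    calc β * (p x w₀ * β ^ G.dist w₀ y + (1 - p x w₀) * β ^ (D + 1))
        = p x w₀ * (β * β ^ G.dist w₀ y) + (1 - p x w₀) * β ^ 2 * β ^ D := by ring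
      _ ≤ p x w₀ * β ^ D + (1 - p x w₀) * β ^ 2 * β ^ D := by gcongr
      _ = (p x w₀ + (1 - p x w₀) * β ^ 2) * β ^ D := by ring
      _ ≤ ((1 - 2 * η ^ 2) * β) * β ^ D := by
        gcongr
        nlinarith [mul_nonneg (sub_nonneg.2 (hp_le x w₀ h₀))
          (mul_nonneg hη.le (by linarith : (0:ℝ) ≤ 1 - η))]
      _ = β * ((1 - 2 * η ^ 2) * β ^ D) := by ring
  · rw [hsum_far _ subset_rfl (by simpa using h₀), hp_sum, one_mul, pow_succ']
    gcongr
    nlinarith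

lemma summable_pn (hG : G.IsAcyclic) (hconn : G.Connected) (hp : ∀ x y, 0 ≤ p x y)
    (hp_zero : ∀ x y, ¬ G.Adj x y → p x y = 0)
    (hp_sum : ∀ x, ∑ y ∈ G.neighborFinset x, p x y = 1) {η : ℝ} (hη : 0 < η) (hη' : η < 1 / 2)
    (hp_le : ∀ x y, G.Adj x y → p x y ≤ 1 / 2 - η) (x y : S) :
    Summable fun n => pn p n x y := by
  have hβ : 0 ≤ 1 - 2 * η := by linarith
  have hθ : 0 ≤ 1 - 2 * η ^ 2 := by nlinarith
  refine .of_nonneg_of_le (fun n => pn_nonneg hp n x y) (fun n => ?_)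
    (summable_geometric_of_lt_one hθ (by nlinarith))
  calc pn p n x y ≤ (1 - 2 * η ^ 2) ^ n * (1 - 2 * η) ^ G.dist x y :=
        pn_le_pow_mul_of_sum_le hp hp_zero hθ (fun _ => pow_nonneg hβ _) (by simp)
          (sum_mul_pow_dist_le hG hconn hp hp_sum hη hη' hp_le · y) n x
    _ ≤ (1 - 2 * η ^ 2) ^ n :=
        mul_le_of_le_one_right (pow_nonneg hθ n) (pow_le_one₀ hβ (by linarith))

lemma green_mul_pn_le (hp : ∀ x y, 0 ≤ p x y) (hp_zero : ∀ x y, ¬ G.Adj x y → p x y = 0)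
    (hsum : ∀ x y, Summable fun n => pn p n x y) (n : ℕ) (x z y : S) :
    green p x z * pn p n z y ≤ green p x y :=
  calc green p x z * pn p n z y = ∑' m, pn p m x z * pn p n z y := tsum_mul_right.symm
    _ ≤ ∑' m, pn p (m + n) x y :=
      (hsum x z).mul_right _ |>.tsum_le_tsum (fun m => pn_mul_pn_le hp hp_zero m n x z y)
        ((summable_nat_add_iff n).2 (hsum x y))
    _ ≤ green p x y := by
      rw [green, ← (hsum x y).sum_add_tsum_nat_add n]
      exact le_add_of_nonneg_left (Finset.sum_nonneg fun i _ => pn_nonneg hp i x y)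

lemma pow_two_mul_dist_le_green_mul_div (hconn : G.Connected) (hp : ∀ x y, 0 ≤ p x y)
    (hp_zero : ∀ x y, ¬ G.Adj x y → p x y = 0) (hsum : ∀ x y, Summable fun n => pn p n x y)
    {ε : ℝ} (hε : 0 < ε) (hε_le : ∀ x y, G.Adj x y → ε ≤ p x y) (o y z : S) :
    ε ^ (2 * G.dist y z) ≤ green p o y * (green p y z / green p o z) := by
  have hpow_dist_le_pn (a b : S) : ε ^ G.dist a b ≤ pn p (G.dist a b) a b := by
    obtain ⟨q, hq⟩ := hconn.exists_walk_length_eq_dist a b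
    simpa [hq] using pow_length_le_pn hp hp_zero hε.le hε_le q
  have hpow_dist_le_green (a b : S) : ε ^ G.dist a b ≤ green p a b :=
    (hpow_dist_le_pn a b).trans (pn_le_green hp (hsum a b) _)
  have hoz : 0 < green p o z := (pow_pos hε _).trans_le (hpow_dist_le_green o z)
  calc ε ^ (2 * G.dist y z)
      = (green p o z * ε ^ G.dist z y) * (ε ^ G.dist y z / green p o z) := by
        rw [dist_comm]; field_simp; ring
    _ ≤ green p o y * (green p y z / green p o z) := by
      gcongr
      · exact green_nonneg hp o y
      · exact (mul_le_mul_of_nonneg_left (hpow_dist_le_pn z y) hoz.le).trans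
          (green_mul_pn_le hp hp_zero hsum _ o z y)
      · exact hpow_dist_le_green y z

end

/-- **Ancona's lemma for trees.** Under hypothesis (H), for
every `c ∈ ℕ` the constant `α = 3 ε^(2c+2) > 0` (depending only on `ε` and
`c`) satisfies: for every geodesic ray `γ` from `o` (with projection
`π(y) = γ (k y)`) and every `y` with `d(y, π(y)) ≤ c`,
`G(o,y) ⬝ K(y) ≥ α`, where `K(y) = G(y,π(y))/G(o,π(y))`. -/
theorem ancona_lemma
    {S : Type*} [Countable S] (G : SimpleGraph S)
    [∀ x : S, Fintype (G.neighborSet x)]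
    (hconn : G.Connected) (hacyc : G.IsAcyclic)
    (p : S → S → ℝ)
    (hp_pos : ∀ x y, 0 < p x y ↔ G.Adj x y)
    (hp_zero : ∀ x y, ¬ G.Adj x y → p x y = 0)
    (hp_sum : ∀ x, ∑ y ∈ G.neighborFinset x, p x y = 1)
    (ε η : ℝ) (hε : 0 < ε) (hη : 0 < η)
    (hH : ∀ x y, G.Adj x y → ε ≤ p x y ∧ p x y ≤ 1 / 2 - η)
    (c : ℕ) :
    ∃ α : ℝ, 0 < α ∧ α = 3 * ε ^ (2 * c + 2) ∧
      ∀ (o : S) (γ : ℕ → S), γ 0 = o →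
        (∀ m n : ℕ, (G.dist (γ m) (γ n) : ℤ) = |(m : ℤ) - (n : ℤ)|) →
        ∀ k : S → ℕ,
          (∀ (x : S) (n : ℕ), G.dist x (γ (k x)) ≤ G.dist x (γ n)) →
          (∀ (x : S) (n : ℕ), G.dist x (γ n) ≤ G.dist x (γ (k x)) → n = k x) →
          ∀ y : S, G.dist y (γ (k y)) ≤ c →
            α ≤ green p o y * (green p y (γ (k y)) / green p o (γ (k y))) := by
  refine ⟨3 * ε ^ (2 * c + 2), by positivity, rfl, fun o γ _ _ k _ _ y hyc => ?_⟩
  have hp (x y : S) : 0 ≤ p x y := by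
    by_cases h : G.Adj x y
    · exact ((hp_pos x y).2 h).le
    · exact (hp_zero x y h).ge
  obtain ⟨z, hz⟩ := Finset.nonempty_of_sum_ne_zero (s := G.neighborFinset o) (f := p o)
    (by rw [hp_sum o]; exact one_ne_zero)
  have hεη : ε ≤ 1 / 2 - η := (hH o z (by simpa using hz)).elim le_trans
  have hsum := summable_pn hacyc hconn hp hp_zero hp_sum hη (by linarith)
    (fun x y h => (hH x y h).2)
  calc 3 * ε ^ (2 * c + 2) = (3 * ε ^ 2) * ε ^ (2 * c) := by ring
    _ ≤ ε ^ (2 * c) := mul_le_of_le_one_left (by positivity) (by nlinarith)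
    _ ≤ ε ^ (2 * G.dist y (γ (k y))) := pow_le_pow_of_le_one hε.le (by linarith) (by omega)
    _ ≤ _ := pow_two_mul_dist_le_green_mul_div hconn hp hp_zero hsum hε
        (fun x y h => (hH x y h).1) o y (γ (k y))

end
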